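/- Let c₁ > 0, c₂ < 0, β₁ ≠ 0, and α₂, β₂ be real parameters, and consider the fourth-order memristor system with f₁ = β₁(x₃ − x₁ − y₁), f₂ = β₂x₃, f₃ = −x₂ − α₂x₃ − x₁ and g₁ = x₁ − (c₁y₁³ + c₂y₁). Then the set of (x₁,x₂,x₃,y₁) ∈ ℝ⁴ satisfying g₁ = 0, ∂g₁/∂y₁ = 0 and Σᵢ(∂g₁/∂xᵢ)·fᵢ = 0 (the pseudo singular manifold) consists exactly of the two lines { ((2c₂/3)·σs, x₂, (2c₂/3 + 1)·σs, σs) : x₂ ∈ ℝ } for σ ∈ {+1, −1}, where s = √(−c₂/(3c₁)). -/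

import Mathlib

/-! Since `∂g₁/∂x₁ = 1` and `∂g₁/∂x₂ = ∂g₁/∂x₃ = 0`, the third condition is `f₁ = 0`, i.e.
`x₃ = x₁ + y₁` because `β₁ ≠ 0`. The fold condition `3c₁y₁² + c₂ = 0` gives `y₁ = ±s`, and on
it `c₁y₁³ = -(c₂/3)y₁`, so `g₁ = 0` becomes `x₁ = (2c₂/3)y₁`. -/

/-- `f₁ = β₁(x₃ - x₁ - y₁)` of the fourth-order memristor circuit. -/
def mem4f₁ (β₁ x₁ x₂ x₃ y₁ : ℝ) : ℝ := β₁ * (x₃ - x₁ - y₁)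

/-- `f₂ = β₂ x₃`. -/
def mem4f₂ (β₂ x₁ x₂ x₃ y₁ : ℝ) : ℝ := β₂ * x₃

/-- `f₃ = -x₂ - α₂x₃ - x₁`. -/
def mem4f₃ (α₂ x₁ x₂ x₃ y₁ : ℝ) : ℝ := -x₂ - α₂ * x₃ - x₁

/-- `g₁ = x₁ - (c₁y₁³ + c₂y₁)`. -/
def mem4g₁ (c₁ c₂ x₁ x₂ x₃ y₁ : ℝ) : ℝ := x₁ - (c₁ * y₁ ^ 3 + c₂ * y₁)

section
variable (c₁ c₂ x₁ x₂ x₃ y₁ : ℝ)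

theorem hasDerivAt_mem4g₁_y₁ :
    HasDerivAt (fun y => mem4g₁ c₁ c₂ x₁ x₂ x₃ y) (-(3 * c₁ * y₁ ^ 2 + c₂)) y₁ := by
  refine ((hasDerivAt_const y₁ x₁).sub
    (((hasDerivAt_pow 3 y₁).const_mul c₁).add ((hasDerivAt_id y₁).const_mul c₂))).congr_deriv ?_
  norm_num
  ring

theorem deriv_mem4g₁_y₁ :
    deriv (fun y => mem4g₁ c₁ c₂ x₁ x₂ x₃ y) y₁ = -(3 * c₁ * y₁ ^ 2 + c₂) :=
  (hasDerivAt_mem4g₁_y₁ c₁ c₂ x₁ x₂ x₃ y₁).deriv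

theorem deriv_mem4g₁_x₁ : deriv (fun x => mem4g₁ c₁ c₂ x x₂ x₃ y₁) x₁ = 1 :=
  ((hasDerivAt_id x₁).sub_const _).deriv

theorem deriv_mem4g₁_x₂ : deriv (fun x => mem4g₁ c₁ c₂ x₁ x x₃ y₁) x₂ = 0 :=
  deriv_const _ _

theorem deriv_mem4g₁_x₃ : deriv (fun x => mem4g₁ c₁ c₂ x₁ x₂ x y₁) x₃ = 0 :=
  deriv_const _ _

end

theorem mul_sq_add_eq_zero_iff {a b y : ℝ} (ha : a ≠ 0) (hba : 0 ≤ -b / a) :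
    a * y ^ 2 + b = 0 ↔ y = √(-b / a) ∨ y = -√(-b / a) := by
  rw [← sq_eq_sq_iff_eq_or_eq_neg, Real.sq_sqrt hba, eq_div_iff ha]
  constructor <;> intro h <;> linarith

theorem cubic_eq_of_three_mul_sq_add_eq_zero {c₁ c₂ y : ℝ} (h : 3 * c₁ * y ^ 2 + c₂ = 0) :
    c₁ * y ^ 3 + c₂ * y = 2 * c₂ / 3 * y := by
  linear_combination y / 3 * h

theorem eq_cubic_and_three_mul_sq_add_eq_zero_iff {c₁ c₂ x y : ℝ} (hc₁ : c₁ ≠ 0)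
    (hc : 0 ≤ -c₂ / (3 * c₁)) :
    x = c₁ * y ^ 3 + c₂ * y ∧ 3 * c₁ * y ^ 2 + c₂ = 0 ↔
      (y = √(-c₂ / (3 * c₁)) ∨ y = -√(-c₂ / (3 * c₁))) ∧ x = 2 * c₂ / 3 * y := by
  have hfold := mul_sq_add_eq_zero_iff (mul_ne_zero three_ne_zero hc₁) hc (y := y)
  constructor
  · rintro ⟨hx, hy⟩
    exact ⟨hfold.1 hy, hx.trans (cubic_eq_of_three_mul_sq_add_eq_zero hy)⟩
  · rintro ⟨hy, hx⟩
    have hy := hfold.2 hy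
    exact ⟨hx.trans (cubic_eq_of_three_mul_sq_add_eq_zero hy).symm, hy⟩

/-- For `c₁ > 0`, `c₂ < 0`, `β₁ ≠ 0`, the pseudo singular manifold of the
fourth-order memristor system, i.e. the set of solutions of `g₁ = 0`, `∂g₁/∂y₁ = 0`,
`Σᵢ (∂g₁/∂xᵢ) fᵢ = 0`, consists exactly of the two lines
`((2c₂/3)σs, x₂, (2c₂/3 + 1)σs, σs)`, `x₂ ∈ ℝ`, `σ = ±1`, where `s = √(-c₂/(3c₁))`. -/
theorem pseudo_singular_manifold_fourth_order
    (c₁ c₂ β₁ α₂ β₂ : ℝ) (hc₁ : c₁ > 0) (hc₂ : c₂ < 0) (hβ₁ : β₁ ≠ 0) :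
    {p : ℝ × ℝ × ℝ × ℝ |
        mem4g₁ c₁ c₂ p.1 p.2.1 p.2.2.1 p.2.2.2 = 0 ∧
        deriv (fun y₁ => mem4g₁ c₁ c₂ p.1 p.2.1 p.2.2.1 y₁) p.2.2.2 = 0 ∧
        deriv (fun x₁ => mem4g₁ c₁ c₂ x₁ p.2.1 p.2.2.1 p.2.2.2) p.1
            * mem4f₁ β₁ p.1 p.2.1 p.2.2.1 p.2.2.2
          + deriv (fun x₂ => mem4g₁ c₁ c₂ p.1 x₂ p.2.2.1 p.2.2.2) p.2.1
            * mem4f₂ β₂ p.1 p.2.1 p.2.2.1 p.2.2.2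
          + deriv (fun x₃ => mem4g₁ c₁ c₂ p.1 p.2.1 x₃ p.2.2.2) p.2.2.1
            * mem4f₃ α₂ p.1 p.2.1 p.2.2.1 p.2.2.2
          = 0}
    = {p : ℝ × ℝ × ℝ × ℝ | ∃ x₂ : ℝ,
         p = ((2 * c₂ / 3) * Real.sqrt (-c₂ / (3 * c₁)), x₂,
              (2 * c₂ / 3 + 1) * Real.sqrt (-c₂ / (3 * c₁)),
              Real.sqrt (-c₂ / (3 * c₁)))
         ∨ p = ((2 * c₂ / 3) * (-Real.sqrt (-c₂ / (3 * c₁))), x₂,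
                (2 * c₂ / 3 + 1) * (-Real.sqrt (-c₂ / (3 * c₁))),
                -Real.sqrt (-c₂ / (3 * c₁)))} := by
  ext ⟨x₁, x₂, x₃, y⟩
  simp only [Set.mem_ofPred_eq, deriv_mem4g₁_y₁, deriv_mem4g₁_x₁, deriv_mem4g₁_x₂,
    deriv_mem4g₁_x₃]
  simp only [mem4g₁, mem4f₁, one_mul, zero_mul, add_zero, neg_eq_zero, mul_eq_zero, hβ₁,
    false_or, sub_sub, sub_eq_zero, Prod.mk.injEq]
  rw [← and_assoc, eq_cubic_and_three_mul_sq_add_eq_zero_iff hc₁.ne'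
    (div_nonneg (by linarith) (by positivity))]
  constructor
  · rintro ⟨⟨rfl | rfl, rfl⟩, rfl⟩
    · exact ⟨x₂, Or.inl ⟨rfl, rfl, by ring, rfl⟩⟩
    · exact ⟨x₂, Or.inr ⟨rfl, rfl, by ring, rfl⟩⟩
  · rintro ⟨_, ⟨rfl, -, rfl, rfl⟩ | ⟨rfl, -, rfl, rfl⟩⟩
    · exact ⟨⟨Or.inl rfl, rfl⟩, by ring⟩
    · exact ⟨⟨Or.inr rfl, rfl⟩, by ring⟩
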